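/- Assume (i) the return-difference lemma |J(π) − J(π')| ≤ (R_max/(1−γ)²)·E_{s∼d_π}‖π(·|s) − π'(·|s)‖₁, (ii) Pinsker's inequality pointwise, and (iii) the per-state KL bound D_KL(π_human(·|s)‖π_AV(·|s)) ≤ H − ε for all s, where H is the average entropy of the human policy. Then the return of the mixed policy satisfies the two-sided bound J(π_human) − (√2·(1−β)·R_max/(1−γ)²)·√(H−ε) ≤ J(π_mix) ≤ J(π_human) + (√2·(1−β)·R_max/(1−γ)²)·√(H−ε). -/
import Mathlib


open Finset

/-- two-sided return bound for the mixed behavior policy. -/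
theorem mixed_policy_return_two_sided_bound
    {S : Type*} {A : Type*} [Fintype S] [Fintype A]
    (γ Rmax : ℝ) (hγ : 0 ≤ γ ∧ γ < 1) (hR : 0 ≤ Rmax)
    (J : (S → A → ℝ) → ℝ)
    (d : (S → A → ℝ) → S → ℝ)
    (hd : ∀ π, (∀ s, 0 ≤ d π s) ∧ ∑ s, d π s = 1)
    -- (i) the return-difference lemma
    (hlem : ∀ π π' : S → A → ℝ,
      |J π - J π'| ≤ Rmax / (1 - γ)^2 * ∑ s, d π s * ∑ a, |π s a - π' s a|)
    (T : S → ℝ) (hT : ∀ s, T s = 0 ∨ T s = 1)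
    (πhuman πAV πmix : S → A → ℝ)
    (hmix : ∀ s a, πmix s a = T s * πhuman s a + (1 - T s) * πAV s a)
    (KL : S → ℝ)   -- per-state KL divergence D_KL(π_human(·|s) ‖ π_AV(·|s))
    (hKLdef : ∀ s, KL s = ∑ a, πhuman s a * Real.log (πhuman s a / πAV s a))
    -- (ii) Pinsker's inequality pointwise
    (hPinsker : ∀ s, ∑ a, |πhuman s a - πAV s a| ≤ Real.sqrt (2 * KL s))
    (H ε : ℝ) (hHε : 0 ≤ H - ε)
    -- (iii) per-state KL bound
    (hKL : ∀ s, KL s ≤ H - ε)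
    (hden : 0 < ∑ s, d πmix s * ∑ a, |πhuman s a - πAV s a|)
    (β : ℝ)
    (hβ : β = (∑ s, d πmix s * (T s * ∑ a, |πhuman s a - πAV s a|)) /
      (∑ s, d πmix s * ∑ a, |πhuman s a - πAV s a|)) :
    J πhuman - Real.sqrt 2 * (1 - β) * Rmax / (1 - γ)^2 * Real.sqrt (H - ε)
      ≤ J πmix ∧
    J πmix ≤
      J πhuman + Real.sqrt 2 * (1 - β) * Rmax / (1 - γ)^2 * Real.sqrt (H - ε) := by

  set L : S → ℝ := fun s => ∑ a, |πhuman s a - πAV s a| with hL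
  have hLnn : ∀ s, 0 ≤ L s := fun s => Finset.sum_nonneg (fun a _ => abs_nonneg _)
  set D : ℝ := ∑ s, d πmix s * L s with hD
  set N : ℝ := ∑ s, d πmix s * (T s * L s) with hN
  have hdnn := (hd πmix).1
  have hdsum := (hd πmix).2
  -- per-state equality
  have h2 : ∀ s, (∑ a, |πmix s a - πhuman s a|) = (1 - T s) * L s := by
    intro s
    rcases hT s with h | h
    · simp only [hL, h, sub_zero, one_mul, Finset.mul_sum]
      apply Finset.sum_congr rfl
      intro a _
      rw [hmix s a, h]
      ring_nf
      rw [abs_sub_comm]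
      ring_nf
    · simp only [hL, h, sub_self, zero_mul]
      apply Finset.sum_eq_zero
      intro a _
      rw [hmix s a, h]
      ring_nf
      simp
  have hsum : (∑ s, d πmix s * ∑ a, |πmix s a - πhuman s a|) = D - N := by
    rw [hD, hN, ← Finset.sum_sub_distrib]
    apply Finset.sum_congr rfl
    intro s _
    rw [h2 s]; ring
  have hNleD : N ≤ D := by
    apply Finset.sum_le_sum
    intro s _
    rcases hT s with h | h <;> rw [h]
    · have := mul_nonneg (hdnn s) (hLnn s); nlinarith
    · simp
  have hβ1 : 1 - β = (D - N) / D := by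
    rw [hβ]; field_simp
  have hβnn : 0 ≤ 1 - β := by
    rw [hβ1]; exact div_nonneg (by linarith) hden.le
  have hDle : D ≤ Real.sqrt 2 * Real.sqrt (H - ε) := by
    calc D ≤ ∑ s, d πmix s * (Real.sqrt 2 * Real.sqrt (H - ε)) := by
            apply Finset.sum_le_sum
            intro s _
            apply mul_le_mul_of_nonneg_left _ (hdnn s)
            calc L s ≤ Real.sqrt (2 * KL s) := hPinsker s
              _ ≤ Real.sqrt (2 * (H - ε)) := by
                  apply Real.sqrt_le_sqrt; nlinarith [hKL s]
              _ = Real.sqrt 2 * Real.sqrt (H - ε) := Real.sqrt_mul (by norm_num) _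
      _ = Real.sqrt 2 * Real.sqrt (H - ε) := by
            rw [← Finset.sum_mul, hdsum, one_mul]
  have hC : 0 ≤ Rmax / (1 - γ)^2 := by positivity
  have key : |J πmix - J πhuman| ≤
      Real.sqrt 2 * (1 - β) * Rmax / (1 - γ)^2 * Real.sqrt (H - ε) := by
    have h1 := hlem πmix πhuman
    rw [hsum] at h1
    have hDN : D - N = (1 - β) * D := by
      rw [hβ1]; field_simp
    rw [hDN] at h1
    calc |J πmix - J πhuman| ≤ Rmax / (1 - γ)^2 * ((1 - β) * D) := h1
      _ ≤ Rmax / (1 - γ)^2 * ((1 - β) * (Real.sqrt 2 * Real.sqrt (H - ε))) := by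
          apply mul_le_mul_of_nonneg_left _ hC
          exact mul_le_mul_of_nonneg_left hDle hβnn
      _ = Real.sqrt 2 * (1 - β) * Rmax / (1 - γ)^2 * Real.sqrt (H - ε) := by ring
  obtain ⟨ha, hb⟩ := abs_le.mp key
  constructor <;> linarith
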